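/- arXiv:1812.11773 — 2 statements merged into one kernel-verified Lean document; each statement's English description precedes it below -/
import Mathlib

section
/- Let b be bounded by K and Lipschitz with constant K in the state and (Kantorovich–Rubinstein) measure variables. Then the map Ψ : P(ℝ^d × C_T) → P(C_T), ν ↦ (S^ν)_# ν, where S^ν is the solution map of x_t = x₀ + ∫₀^t b(s, x_s, (x_s)_# ν) ds + γ_t, is continuous with respect to weak convergence of probability measures. -/
open MeasureTheory Filter Topology ENNReal

/-- The space `C_T = C([0,T], ℝ^d)` of continuous paths, with the supremum norm. -/
abbrev PathSp (d : ℕ) (T : ℝ) := C(Set.Icc (0:ℝ) T, Fin d → ℝ)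

noncomputable instance {d : ℕ} {T : ℝ} : MeasurableSpace (PathSp d T) := borel _
instance {d : ℕ} {T : ℝ} : BorelSpace (PathSp d T) := ⟨rfl⟩

/-- The Kantorovich–Rubinstein distance on probability measures over a metric space:
`Π(μ,ν) = sup { ∫ f dμ − ∫ f dν : f 1-Lipschitz, |f| ≤ 1 }`. -/
noncomputable def krDist {E : Type*} [MeasurableSpace E] [PseudoMetricSpace E]
    (μ ν : Measure E) : ℝ :=
  ⨆ f : { f : E → ℝ // LipschitzWith 1 f ∧ ∀ x, |f x| ≤ 1 },
    (∫ x, f.1 x ∂μ) - ∫ x, f.1 x ∂ν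

/-!
For solution maps `S₁ = S^{ν₁}` and `S₂ = S^{ν₂}` fed with the same input `q = (x₀, γ)`, the
difference `S₁ q t - S₂ q t` is the time integral of the drift difference, which the Lipschitz
hypothesis bounds by `K (‖S₁ q s - S₂ q s‖ + Π(μ₁ₛ, μ₂ₛ))`, where `μᵢₛ` is the law of `Sᵢ(·)_s`
under `νᵢ`. Passing through the law of `S₂(·)_s` under `ν₁`, and using that evaluation at time
`s` is 1-Lipschitz on `C_T`, we get
`Π(μ₁ₛ, μ₂ₛ) ≤ sup_p ‖S₁ p s - S₂ p s‖ + Π((S₂)_# ν₁, (S₂)_# ν₂)`.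
Grönwall's lemma, run in an exponentially weighted sup norm (Bielecki), then gives
`sup_q ‖S₁ q - S₂ q‖ ≤ C Π((S₂)_# ν₁, (S₂)_# ν₂)`.

The same estimate with `ν₁ = ν₂` shows that `S^ν` is Lipschitz, so `ν' ↦ (S^ν)_# ν'` is weakly
continuous. As `Π` is at most three times the Lévy–Prokhorov distance, `ν' → ν` weakly forces
`S^{ν'} → S^ν` uniformly, and pushing weakly convergent measures forward along uniformly
convergent maps preserves weak convergence.
-/

open Set

section KantorovichRubinstein

variable {E : Type*} [MeasurableSpace E] [PseudoMetricSpace E]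

abbrev KRTest (E : Type*) [PseudoMetricSpace E] :=
  { f : E → ℝ // LipschitzWith 1 f ∧ ∀ x, |f x| ≤ 1 }

instance : Zero (KRTest E) :=
  ⟨⟨0, LipschitzWith.const' 0 |>.weaken zero_le_one, fun _ => by simp⟩⟩

lemma KRTest.integrable [OpensMeasurableSpace E] (f : KRTest E) (μ : Measure E)
    [IsFiniteMeasure μ] : Integrable f.1 μ :=
  (integrable_const (1 : ℝ)).mono' f.2.1.continuous.aestronglyMeasurable
    (Eventually.of_forall fun x => (Real.norm_eq_abs _).trans_le (f.2.2 x))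

lemma KRTest.abs_integral_le (f : KRTest E) (μ : Measure E) [IsProbabilityMeasure μ] :
    |∫ x, f.1 x ∂μ| ≤ 1 := by
  simpa using norm_integral_le_of_norm_le_const (μ := μ)
    (Eventually.of_forall fun x => (Real.norm_eq_abs _).trans_le (f.2.2 x))

variable (μ ν : Measure E)

lemma krDist_le {c : ℝ} (h : ∀ f : KRTest E, (∫ x, f.1 x ∂μ) - ∫ x, f.1 x ∂ν ≤ c) :
    krDist μ ν ≤ c :=
  ciSup_le h

lemma krDist_nonneg : 0 ≤ krDist μ ν := by
  by_cases h : BddAbove (range fun f : KRTest E => (∫ x, f.1 x ∂μ) - ∫ x, f.1 x ∂ν)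
  · refine (le_ciSup h 0).trans_eq' ?_
    show (∫ _, (0 : ℝ) ∂μ) - ∫ _, (0 : ℝ) ∂ν = 0
    simp
  · -- An unbounded supremum is `0` in `ℝ`.
    rw [krDist, Real.iSup_of_not_bddAbove h]

lemma krDist_self : krDist μ μ = 0 :=
  (krDist_le μ μ fun f => by simp).antisymm (krDist_nonneg μ μ)

variable [IsProbabilityMeasure μ] [IsProbabilityMeasure ν]

lemma bddAbove_range_integral_sub_integral :
    BddAbove (range fun f : KRTest E => (∫ x, f.1 x ∂μ) - ∫ x, f.1 x ∂ν) := by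
  refine ⟨2, ?_⟩
  rintro _ ⟨f, rfl⟩
  linarith [(abs_le.1 (f.abs_integral_le μ)).2, (abs_le.1 (f.abs_integral_le ν)).1]

lemma le_krDist (f : KRTest E) : (∫ x, f.1 x ∂μ) - ∫ x, f.1 x ∂ν ≤ krDist μ ν :=
  le_ciSup (bddAbove_range_integral_sub_integral μ ν) f

lemma krDist_triangle (κ : Measure E) [IsProbabilityMeasure κ] :
    krDist μ κ ≤ krDist μ ν + krDist ν κ :=
  krDist_le μ κ fun f => by linarith [le_krDist μ ν f, le_krDist ν κ f]

lemma krDist_map_le_of_lipschitzWith {F : Type*} [MeasurableSpace F] [PseudoMetricSpace F]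
    [OpensMeasurableSpace F] {φ : E → F} (hφ : LipschitzWith 1 φ) (hφm : Measurable φ) :
    krDist (μ.map φ) (ν.map φ) ≤ krDist μ ν := by
  refine krDist_le _ _ fun f => ?_
  rw [integral_map hφm.aemeasurable f.2.1.continuous.aestronglyMeasurable,
    integral_map hφm.aemeasurable f.2.1.continuous.aestronglyMeasurable]
  exact le_krDist μ ν ⟨f.1 ∘ φ, by simpa using f.2.1.comp hφ, fun x => f.2.2 (φ x)⟩

variable [OpensMeasurableSpace E]

lemma BoundedContinuousFunction.integral_le_integral_add_of_levyProkhorovEDist_lt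
    {ε M : ℝ} (hε : 0 < ε) (h : levyProkhorovEDist μ ν < ENNReal.ofReal ε)
    (g : BoundedContinuousFunction E ℝ) (hg : LipschitzWith 1 g) (hg0 : ∀ x, 0 ≤ g x)
    (hM : ‖g‖ ≤ M) : ∫ x, g x ∂μ ≤ (∫ x, g x ∂ν) + ε * (M + 1) := by
  set φ : ℝ → ℝ := fun t => ν.real {x | t ≤ g x + ε}
  have hφ : IntegrableOn φ (Ioc 0 (M + ε)) := by
    refine Measure.integrableOn_of_bounded (M := 1) measure_Ioc_lt_top.ne ?_ ?_
    · refine (Antitone.measurable fun s t hst => ?_).aestronglyMeasurable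
      exact measureReal_mono fun x hx => hst.trans hx
    · exact Eventually.of_forall fun t => by
        rw [Real.norm_of_nonneg measureReal_nonneg]; exact measureReal_le_one
  have hthick (t : ℝ) : Metric.thickening ε {x | t ≤ g x} ⊆ {x | t ≤ g x + ε} := by
    intro x hx
    obtain ⟨z, hz, hxz⟩ := Metric.mem_thickening_iff.1 hx
    have := (hg.dist_le_mul z x).trans (by simpa [dist_comm] using hxz.le)
    rw [Real.dist_eq] at this
    show t ≤ g x + ε
    linarith [(abs_le.1 this).2, show t ≤ g z from hz]
  have hlayer : ∫ x, g x + ε ∂ν = ∫ t in Ioc 0 (M + ε), φ t :=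
    Integrable.integral_eq_integral_Ioc_meas_le ((g.integrable ν).add (integrable_const ε))
      (Eventually.of_forall fun x => show 0 ≤ g x + ε by linarith [hg0 x])
      (Eventually.of_forall fun x => show g x + ε ≤ M + ε by linarith [g.apply_le_norm x])
  calc ∫ x, g x ∂μ
      ≤ (∫ t in Ioc 0 ‖g‖, ν.real (Metric.thickening ε {x | t ≤ g x})) + ε * ‖g‖ :=
        g.integral_le_of_levyProkhorovEDist_lt μ ν hε h (Eventually.of_forall hg0)
    _ ≤ (∫ t in Ioc 0 ‖g‖, φ t) + ε * M :=
        add_le_add (integral_mono_of_nonneg (Eventually.of_forall fun _ => measureReal_nonneg)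
          (hφ.mono_set (Ioc_subset_Ioc_right (by linarith)))
          (Eventually.of_forall fun t => measureReal_mono (hthick t)))
          (mul_le_mul_of_nonneg_left hM hε.le)
    _ ≤ (∫ t in Ioc 0 (M + ε), φ t) + ε * M :=
        add_le_add_left (setIntegral_mono_set hφ
          (Eventually.of_forall fun _ => measureReal_nonneg)
          (Ioc_subset_Ioc_right (show ‖g‖ ≤ M + ε by linarith)).eventuallyLE) _
    _ = (∫ x, g x ∂ν) + ε * (M + 1) := by
        rw [← hlayer, integral_add (g.integrable ν) (integrable_const ε)]
        simp; ring

lemma krDist_le_of_levyProkhorovEDist_lt {ε : ℝ} (hε : 0 < ε)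
    (h : levyProkhorovEDist μ ν < ENNReal.ofReal ε) : krDist μ ν ≤ 3 * ε := by
  refine krDist_le μ ν fun f => ?_
  have hf (x : E) := abs_le.1 (f.2.2 x)
  let g : BoundedContinuousFunction E ℝ :=
    .ofNormedAddCommGroup (f.1 · + 1) (f.2.1.continuous.add continuous_const) 2
      fun x => by rw [Real.norm_eq_abs, abs_le]; constructor <;> linarith [hf x]
  have hint (κ : Measure E) [IsProbabilityMeasure κ] : ∫ x, g x ∂κ = (∫ x, f.1 x ∂κ) + 1 := by
    rw [show (g : E → ℝ) = fun x => f.1 x + 1 from rfl,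
      integral_add (f.integrable κ) (integrable_const 1)]
    simp
  have := g.integral_le_integral_add_of_levyProkhorovEDist_lt μ ν hε h
    (by simpa using f.2.1.add (LipschitzWith.const (1 : ℝ)) : LipschitzWith 1 (f.1 · + 1))
    (fun x => by
      show 0 ≤ f.1 x + 1; linarith [hf x])
    (BoundedContinuousFunction.norm_ofNormedAddCommGroup_le _ zero_le_two _)
  rw [hint μ, hint ν] at this
  linarith

lemma krDist_le_three_mul_levyProkhorovDist : krDist μ ν ≤ 3 * levyProkhorovDist μ ν := by
  refine le_of_forall_pos_le_add fun δ hδ => ?_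
  have hLP : 0 ≤ levyProkhorovDist μ ν := ENNReal.toReal_nonneg
  have hlt : levyProkhorovEDist μ ν < ENNReal.ofReal (levyProkhorovDist μ ν + δ / 3) :=
    (ENNReal.lt_ofReal_iff_toReal_lt (levyProkhorovEDist_ne_top μ ν)).2
      (by unfold levyProkhorovDist; linarith)
  linarith [krDist_le_of_levyProkhorovEDist_lt μ ν (by positivity) hlt]

omit [IsProbabilityMeasure μ] [IsProbabilityMeasure ν] in
lemma krDist_map_le_of_dist_le {X : Type*} [MeasurableSpace X] (ρ : Measure X)
    [IsProbabilityMeasure ρ] {f g : X → E} (hf : Measurable f) (hg : Measurable g) {c : ℝ}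
    (h : ∀ x, dist (f x) (g x) ≤ c) : krDist (ρ.map f) (ρ.map g) ≤ c := by
  refine krDist_le _ _ fun φ => ?_
  have hφf : Integrable (fun x => φ.1 (f x)) ρ := (φ.integrable _).comp_measurable hf
  have hφg : Integrable (fun x => φ.1 (g x)) ρ := (φ.integrable _).comp_measurable hg
  rw [integral_map hf.aemeasurable φ.2.1.continuous.aestronglyMeasurable,
    integral_map hg.aemeasurable φ.2.1.continuous.aestronglyMeasurable, ← integral_sub hφf hφg]
  refine (integral_mono (hφf.sub hφg) (integrable_const c) fun x => ?_).trans (by simp)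
  calc φ.1 (f x) - φ.1 (g x) ≤ dist (φ.1 (f x)) (φ.1 (g x)) := (le_abs_self _).trans_eq
        (Real.dist_eq _ _).symm
    _ ≤ dist (f x) (g x) := by simpa using φ.2.1.dist_le_mul (f x) (g x)
    _ ≤ c := h x

end KantorovichRubinstein

section WeakConvergence

variable {ι E : Type*} [MeasurableSpace E] [PseudoMetricSpace E] [OpensMeasurableSpace E]
  {l : Filter ι}

lemma levyProkhorovDist_map_le_of_dist_le {X : Type*} [MeasurableSpace X] (ρ : Measure X)
    [IsProbabilityMeasure ρ] {f g : X → E} (hf : Measurable f) (hg : Measurable g) {c : ℝ}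
    (hc : 0 ≤ c) (h : ∀ x, dist (f x) (g x) ≤ c) :
    levyProkhorovDist (ρ.map f) (ρ.map g) ≤ c := by
  have := Measure.isProbabilityMeasure_map (μ := ρ) hf.aemeasurable
  have := Measure.isProbabilityMeasure_map (μ := ρ) hg.aemeasurable
  refine levyProkhorovDist_le_of_forall_le _ _ hc fun ε B hε hB => ?_
  rw [Measure.map_apply hf hB, Measure.map_apply hg Metric.isOpen_thickening.measurableSet]
  refine (measure_mono fun x hx => ?_).trans le_self_add
  exact Metric.mem_thickening_iff.2 ⟨f x, hx, by rw [dist_comm]; exact (h x).trans_lt hε⟩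

variable [TopologicalSpace.SeparableSpace E]

lemma tendsto_krDist_of_tendsto {μs : ι → ProbabilityMeasure E} {μ : ProbabilityMeasure E}
    (h : Tendsto μs l (𝓝 μ)) :
    Tendsto (fun i => krDist (μs i : Measure E) μ) l (𝓝 0) := by
  have hLP : Tendsto (fun i => levyProkhorovDist (μs i : Measure E) μ) l (𝓝 0) :=
    tendsto_iff_dist_tendsto_zero.1
      ((LevyProkhorov.probabilityMeasureHomeomorph.continuous.tendsto μ).comp h)
  refine squeeze_zero (fun i => krDist_nonneg _ _)
    (fun i => krDist_le_three_mul_levyProkhorovDist _ _) ?_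
  simpa using hLP.const_mul 3

lemma ProbabilityMeasure.tendsto_map_of_tendstoUniformly {X : Type*} [MeasurableSpace X]
    [TopologicalSpace X] [OpensMeasurableSpace X] [BorelSpace E]
    {μs : ι → ProbabilityMeasure X} {μ : ProbabilityMeasure X} (hμ : Tendsto μs l (𝓝 μ))
    {F : ι → X → E} {f : X → E} (hF : ∀ i, Measurable (F i)) (hf : Continuous f)
    (hFf : TendstoUniformly F f l) :
    Tendsto (fun i => (μs i).map (hF i).aemeasurable) l (𝓝 (μ.map hf.aemeasurable)) := by
  let H := LevyProkhorov.probabilityMeasureHomeomorph (Ω := E)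
  rw [H.isInducing.tendsto_nhds_iff, Metric.tendsto_nhds]
  intro ε hε
  have hmap := (H.continuous.tendsto _).comp
    (((ProbabilityMeasure.continuous_map hf).tendsto μ).comp hμ)
  filter_upwards [Metric.tendsto_nhds.1 hmap (ε / 2) (half_pos hε),
    Metric.tendstoUniformly_iff.1 hFf (ε / 2) (half_pos hε)] with i hi hFi
  have hclose : dist (H ((μs i).map (hF i).aemeasurable)) (H ((μs i).map hf.aemeasurable))
      ≤ ε / 2 :=
    levyProkhorovDist_map_le_of_dist_le _ (hF i) hf.measurable (half_pos hε).le
      fun x => by rw [dist_comm]; exact (hFi x).le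
  simp only [Function.comp_apply] at hi ⊢
  exact (dist_triangle _ (H ((μs i).map hf.aemeasurable)) _).trans_lt (by linarith)

end WeakConvergence

/-- Grönwall's lemma in Bielecki form: the least admissible constant `D = sup u / w` satisfies
`D ≤ a + D / 2`. -/
lemma le_two_mul_mul_of_bootstrap {ι : Type*} {u w : ι → ℝ} {a M : ℝ} (hw : ∀ i, 1 ≤ w i)
    (hu : ∀ i, 0 ≤ u i) (hM : ∀ i, u i ≤ M)
    (h : ∀ D, 0 ≤ D → (∀ i, u i ≤ D * w i) → ∀ i, u i ≤ (a + D / 2) * w i) (i : ι) :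
    u i ≤ 2 * a * w i := by
  have hw0 (j : ι) : 0 < w j := zero_lt_one.trans_le (hw j)
  have hbdd : BddAbove (range fun j => u j / w j) :=
    ⟨M, by rintro _ ⟨j, rfl⟩; exact (div_le_self (hu j) (hw j)).trans (hM j)⟩
  have : Nonempty ι := ⟨i⟩
  set D := ⨆ j, u j / w j
  have hD0 : 0 ≤ D := (div_nonneg (hu i) (hw0 i).le).trans (le_ciSup hbdd i)
  have hle (j : ι) : u j ≤ D * w j := (div_le_iff₀ (hw0 j)).1 (le_ciSup hbdd j)
  have hDa : D ≤ a + D / 2 := ciSup_le fun j => (div_le_iff₀ (hw0 j)).2 (h D hD0 hle j)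
  calc u i ≤ D * w i := hle i
    _ ≤ 2 * a * w i := mul_le_mul_of_nonneg_right (by linarith) (hw0 i).le

lemma norm_setIntegral_Icc_le_of_norm_le_exp {F : Type*} [NormedAddCommGroup F]
    [NormedSpace ℝ F] {g : ℝ → F} {L D c t : ℝ} (hL : 0 < L) (hD : 0 ≤ D) (ht : 0 ≤ t)
    (hg : IntegrableOn g (Icc 0 t)) (hbound : ∀ s ∈ Icc 0 t, ‖g s‖ ≤ D * Real.exp (L * s) + c) :
    ‖∫ s in Icc 0 t, g s‖ ≤ D / L * Real.exp (L * t) + c * t := by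
  have hexp : ∫ s in (0 : ℝ)..t, Real.exp (L * s) = (Real.exp (L * t) - 1) / L := by
    rw [intervalIntegral.integral_comp_mul_left (fun s => Real.exp s) hL.ne', integral_exp]
    simp [div_eq_inv_mul]
  have hexp_cont : Continuous fun s => D * Real.exp (L * s) := by fun_prop
  have hcont : Continuous fun s => D * Real.exp (L * s) + c := by fun_prop
  calc ‖∫ s in Icc 0 t, g s‖ ≤ ∫ s in Icc 0 t, ‖g s‖ := norm_integral_le_integral_norm _
    _ ≤ ∫ s in Icc 0 t, (D * Real.exp (L * s) + c) :=
        setIntegral_mono_on hg.norm hcont.integrableOn_Icc measurableSet_Icc hbound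
    _ = D * ((Real.exp (L * t) - 1) / L) + c * t := by
        rw [integral_Icc_eq_integral_Ioc, ← intervalIntegral.integral_of_le ht,
          intervalIntegral.integral_add (hexp_cont.intervalIntegrable _ _) intervalIntegrable_const,
          intervalIntegral.integral_const_mul, hexp]
        simp [mul_comm]
    _ ≤ D / L * Real.exp (L * t) + c * t := by
        rw [mul_div_assoc', div_mul_eq_mul_div]
        gcongr
        linarith

section McKeanVlasov

variable {d : ℕ} {T : ℝ}

abbrev InputSp (d : ℕ) (T : ℝ) := (Fin d → ℝ) × PathSp d T

noncomputable def drift (b : ℝ → (Fin d → ℝ) → Measure (Fin d → ℝ) → Fin d → ℝ)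
    (ν : Measure (InputSp d T)) (S : InputSp d T → PathSp d T) (q : InputSp d T) :
    ℝ → Fin d → ℝ :=
  Function.extend Subtype.val (fun u : Icc (0 : ℝ) T => b u (S q u) (ν.map fun p => S p u)) 0

def IsSolutionMap (b : ℝ → (Fin d → ℝ) → Measure (Fin d → ℝ) → Fin d → ℝ)
    (ν : Measure (InputSp d T)) (S : InputSp d T → PathSp d T) : Prop :=
  ∀ (x₀ : Fin d → ℝ) (γ : PathSp d T) (t : Icc (0 : ℝ) T),
    S (x₀, γ) t = x₀ + (∫ s in Icc (0 : ℝ) t, drift b ν S (x₀, γ) s) + γ t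

variable {b : ℝ → (Fin d → ℝ) → Measure (Fin d → ℝ) → Fin d → ℝ} {K : ℝ}
  {ν ν₁ ν₂ : Measure (InputSp d T)} {S S₁ S₂ : InputSp d T → PathSp d T}

lemma drift_apply (q : InputSp d T) (u : Icc (0 : ℝ) T) :
    drift b ν S q u = b u (S q u) (ν.map fun p => S p u) :=
  Subtype.val_injective.extend_apply _ _ _

lemma norm_drift_le (hbdd : ∀ t x m, ‖b t x m‖ ≤ K) (q : InputSp d T) (s : ℝ) :
    ‖drift b ν S q s‖ ≤ K := by
  by_cases hs : ∃ u : Icc (0 : ℝ) T, (u : ℝ) = s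
  · obtain ⟨u, rfl⟩ := hs
    rw [drift_apply]
    exact hbdd _ _ _
  · rw [drift, Function.extend_apply' _ _ _ hs]
    simpa using (norm_nonneg _).trans (hbdd 0 0 0)

lemma measurable_map_eval (hS : Measurable S) (ν : Measure (InputSp d T)) [SFinite ν] :
    Measurable fun u : Icc (0 : ℝ) T => ν.map fun p => S p u := by
  have hjoint : Measurable fun pu : InputSp d T × Icc (0 : ℝ) T => S pu.1 pu.2 :=
    ContinuousEval.continuous_eval.measurable.comp ((hS.comp measurable_fst).prodMk measurable_snd)
  refine Measure.measurable_of_measurable_coe _ fun A hA => ?_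
  have heq (u : Icc (0 : ℝ) T) : (ν.map fun p => S p u) A
      = ν ((·, u) ⁻¹' {pu : InputSp d T × Icc (0 : ℝ) T | S pu.1 pu.2 ∈ A}) :=
    Measure.map_apply ((continuous_eval_const u).measurable.comp hS) hA
  simp_rw [heq]
  exact measurable_measure_prodMk_right (hjoint hA)

lemma measurable_drift
    (hbmeas : Measurable fun q : ℝ × (Fin d → ℝ) × Measure (Fin d → ℝ) => b q.1 q.2.1 q.2.2)
    (hS : Measurable S) (ν : Measure (InputSp d T)) [SFinite ν] (q : InputSp d T) :
    Measurable (drift b ν S q) :=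
  (MeasurableEmbedding.subtype_coe measurableSet_Icc).measurable_extend
    (hbmeas.comp (measurable_subtype_coe.prodMk
      ((S q).continuous.measurable.prodMk (measurable_map_eval hS ν))))
    measurable_const

lemma integrableOn_drift
    (hbmeas : Measurable fun q : ℝ × (Fin d → ℝ) × Measure (Fin d → ℝ) => b q.1 q.2.1 q.2.2)
    (hbdd : ∀ t x m, ‖b t x m‖ ≤ K) (hS : Measurable S) (ν : Measure (InputSp d T)) [SFinite ν]
    (q : InputSp d T) (t : ℝ) : IntegrableOn (drift b ν S q) (Icc 0 t) :=
  Measure.integrableOn_of_bounded measure_Icc_lt_top.ne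
    (measurable_drift hbmeas hS ν q).aestronglyMeasurable
    (Eventually.of_forall (norm_drift_le hbdd q))

lemma isProbabilityMeasure_map_eval (hS : Measurable S) (ν : Measure (InputSp d T))
    [IsProbabilityMeasure ν] (u : Icc (0 : ℝ) T) :
    IsProbabilityMeasure (ν.map fun p => S p u) :=
  Measure.isProbabilityMeasure_map ((continuous_eval_const u).measurable.comp hS).aemeasurable

lemma norm_drift_sub_drift_le
    (hbLip : ∀ (t : ℝ) (x x' : Fin d → ℝ) (m m' : Measure (Fin d → ℝ)),
      IsProbabilityMeasure m → IsProbabilityMeasure m' →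
      ‖b t x m - b t x' m'‖ ≤ K * (‖x - x'‖ + krDist m m'))
    [IsProbabilityMeasure ν₁] [IsProbabilityMeasure ν₂] (hS₁ : Measurable S₁)
    (hS₂ : Measurable S₂) (q q' : InputSp d T) (u : Icc (0 : ℝ) T) :
    ‖drift b ν₁ S₁ q u - drift b ν₂ S₂ q' u‖ ≤
      K * (‖S₁ q u - S₂ q' u‖ + krDist (ν₁.map fun p => S₁ p u) (ν₂.map fun p => S₂ p u)) := by
  rw [drift_apply, drift_apply]
  exact hbLip _ _ _ _ _ (isProbabilityMeasure_map_eval hS₁ ν₁ u)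
    (isProbabilityMeasure_map_eval hS₂ ν₂ u)

section Comparison

variable
    (hbmeas : Measurable fun q : ℝ × (Fin d → ℝ) × Measure (Fin d → ℝ) => b q.1 q.2.1 q.2.2)
    (hbdd : ∀ t x m, ‖b t x m‖ ≤ K) [SFinite ν₁] [SFinite ν₂]
    (hS₁ : Measurable S₁) (hS₂ : Measurable S₂)
    (h₁ : IsSolutionMap b ν₁ S₁) (h₂ : IsSolutionMap b ν₂ S₂)
include hbmeas hbdd hS₁ hS₂ h₁ h₂

lemma IsSolutionMap.sub_apply (x₀ x₀' : Fin d → ℝ) (γ γ' : PathSp d T) (t : Icc (0 : ℝ) T) :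
    S₁ (x₀, γ) t - S₂ (x₀', γ') t = (x₀ - x₀') +
      (∫ s in Icc (0 : ℝ) t, drift b ν₁ S₁ (x₀, γ) s - drift b ν₂ S₂ (x₀', γ') s) +
      (γ t - γ' t) := by
  rw [h₁, h₂, integral_sub (integrableOn_drift hbmeas hbdd hS₁ ν₁ _ t)
    (integrableOn_drift hbmeas hbdd hS₂ ν₂ _ t)]
  abel

lemma IsSolutionMap.norm_sub_apply_le_of_norm_drift_sub_le {L D c : ℝ} (hL : 0 < L) (hD : 0 ≤ D)
    (x₀ x₀' : Fin d → ℝ) (γ γ' : PathSp d T) (t : Icc (0 : ℝ) T)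
    (hdrift : ∀ u : Icc (0 : ℝ) T, u ≤ t →
      ‖drift b ν₁ S₁ (x₀, γ) u - drift b ν₂ S₂ (x₀', γ') u‖ ≤ D * Real.exp (L * u) + c) :
    ‖S₁ (x₀, γ) t - S₂ (x₀', γ') t‖ ≤
      ‖x₀ - x₀'‖ + dist γ γ' + (D / L * Real.exp (L * t) + c * t) := by
  rw [IsSolutionMap.sub_apply hbmeas hbdd hS₁ hS₂ h₁ h₂]
  have hint := norm_setIntegral_Icc_le_of_norm_le_exp hL hD t.2.1
    ((integrableOn_drift hbmeas hbdd hS₁ ν₁ _ t).sub (integrableOn_drift hbmeas hbdd hS₂ ν₂ _ t))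
    fun s hs => hdrift ⟨s, hs.1, hs.2.trans t.2.2⟩ hs.2
  simp only [Pi.sub_apply] at hint
  have hγ : ‖γ t - γ' t‖ ≤ dist γ γ' := by
    rw [← dist_eq_norm]; exact ContinuousMap.dist_apply_le_dist t
  exact norm_add₃_le.trans (by linarith)

lemma IsSolutionMap.norm_sub_apply_le_add (x₀ x₀' : Fin d → ℝ) (γ γ' : PathSp d T)
    (t : Icc (0 : ℝ) T) :
    ‖S₁ (x₀, γ) t - S₂ (x₀', γ') t‖ ≤ ‖x₀ - x₀'‖ + dist γ γ' + 2 * K * T := by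
  have hK : 0 ≤ K := (norm_nonneg _).trans (hbdd 0 0 0)
  have := IsSolutionMap.norm_sub_apply_le_of_norm_drift_sub_le hbmeas hbdd hS₁ hS₂ h₁ h₂
    one_pos le_rfl x₀ x₀' γ γ' t (c := 2 * K) fun u _ => by
      linarith [norm_sub_le (drift b ν₁ S₁ (x₀, γ) u) (drift b ν₂ S₂ (x₀', γ') u),
        norm_drift_le (ν := ν₁) (S := S₁) hbdd (x₀, γ) u,
        norm_drift_le (ν := ν₂) (S := S₂) hbdd (x₀', γ') u]
  nlinarith [t.2.2]

end Comparison

lemma IsSolutionMap.norm_sub_apply_le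
    (hbmeas : Measurable fun q : ℝ × (Fin d → ℝ) × Measure (Fin d → ℝ) => b q.1 q.2.1 q.2.2)
    (hbLip : ∀ (t : ℝ) (x x' : Fin d → ℝ) (m m' : Measure (Fin d → ℝ)),
      IsProbabilityMeasure m → IsProbabilityMeasure m' →
      ‖b t x m - b t x' m'‖ ≤ K * (‖x - x'‖ + krDist m m'))
    (hbdd : ∀ t x m, ‖b t x m‖ ≤ K) [IsProbabilityMeasure ν] (hS : Measurable S)
    (h : IsSolutionMap b ν S) (x₀ x₀' : Fin d → ℝ) (γ γ' : PathSp d T) (t : Icc (0 : ℝ) T) :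
    ‖S (x₀, γ) t - S (x₀', γ') t‖ ≤
      2 * (‖x₀ - x₀'‖ + dist γ γ') * Real.exp ((2 * K + 1) * t) := by
  have hK : 0 ≤ K := (norm_nonneg _).trans (hbdd 0 0 0)
  set L := 2 * K + 1
  have hL : 0 < L := by positivity
  have hw (t : Icc (0 : ℝ) T) : 1 ≤ Real.exp (L * t) := Real.one_le_exp (mul_nonneg hL.le t.2.1)
  refine le_two_mul_mul_of_bootstrap hw (fun _ => norm_nonneg _)
    (IsSolutionMap.norm_sub_apply_le_add hbmeas hbdd hS hS h h x₀ x₀' γ γ')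
    (fun D hD hu t => ?_) t
  have hdrift (u : Icc (0 : ℝ) T) (_ : u ≤ t) :
      ‖drift b ν S (x₀, γ) u - drift b ν S (x₀', γ') u‖ ≤ K * D * Real.exp (L * u) + 0 := by
    have := isProbabilityMeasure_map_eval hS ν u
    have := norm_drift_sub_drift_le (ν₁ := ν) (ν₂ := ν) hbLip hS hS (x₀, γ) (x₀', γ') u
    rw [krDist_self, add_zero] at this
    nlinarith [hu u]
  have hKD : K * D / L ≤ D / 2 := by
    rw [div_le_div_iff₀ hL two_pos]; nlinarith
  have := IsSolutionMap.norm_sub_apply_le_of_norm_drift_sub_le hbmeas hbdd hS hS h h hL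
    (mul_nonneg hK hD) x₀ x₀' γ γ' t hdrift
  nlinarith [dist_nonneg (x := γ) (y := γ'), norm_nonneg (x₀ - x₀'), hw t]

theorem IsSolutionMap.lipschitzWith
    (hbmeas : Measurable fun q : ℝ × (Fin d → ℝ) × Measure (Fin d → ℝ) => b q.1 q.2.1 q.2.2)
    (hbLip : ∀ (t : ℝ) (x x' : Fin d → ℝ) (m m' : Measure (Fin d → ℝ)),
      IsProbabilityMeasure m → IsProbabilityMeasure m' →
      ‖b t x m - b t x' m'‖ ≤ K * (‖x - x'‖ + krDist m m'))
    (hbdd : ∀ t x m, ‖b t x m‖ ≤ K) [IsProbabilityMeasure ν] (hS : Measurable S)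
    (h : IsSolutionMap b ν S) :
    LipschitzWith (4 * Real.exp ((2 * K + 1) * T)).toNNReal S := by
  have hK : 0 ≤ K := (norm_nonneg _).trans (hbdd 0 0 0)
  refine LipschitzWith.of_dist_le_mul fun ⟨x₀, γ⟩ ⟨x₀', γ'⟩ => ?_
  have hq : ‖x₀ - x₀'‖ + dist γ γ' ≤ 2 * dist (x₀, γ) (x₀', γ') := by
    rw [Prod.dist_eq, ← dist_eq_norm]
    linarith [le_max_left (dist x₀ x₀') (dist γ γ'), le_max_right (dist x₀ x₀') (dist γ γ')]
  rw [Real.coe_toNNReal _ (by positivity)]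
  refine (ContinuousMap.dist_le (by positivity)).2 fun t => ?_
  calc dist (S (x₀, γ) t) (S (x₀', γ') t)
      ≤ 2 * (‖x₀ - x₀'‖ + dist γ γ') * Real.exp ((2 * K + 1) * t) :=
        (dist_eq_norm _ _).trans_le (h.norm_sub_apply_le hbmeas hbLip hbdd hS x₀ x₀' γ γ' t)
    _ ≤ 2 * (2 * dist (x₀, γ) (x₀', γ')) * Real.exp ((2 * K + 1) * T) := by
        gcongr
        exact t.2.2
    _ = 4 * Real.exp ((2 * K + 1) * T) * dist (x₀, γ) (x₀', γ') := by ring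

lemma krDist_map_eval_le (hS : Measurable S) [IsProbabilityMeasure ν₁]
    [IsProbabilityMeasure ν₂] (u : Icc (0 : ℝ) T) :
    krDist (ν₁.map fun p => S p u) (ν₂.map fun p => S p u) ≤ krDist (ν₁.map S) (ν₂.map S) := by
  have := Measure.isProbabilityMeasure_map (μ := ν₁) hS.aemeasurable
  have := Measure.isProbabilityMeasure_map (μ := ν₂) hS.aemeasurable
  have heval : Measurable fun γ : PathSp d T => γ u := (continuous_eval_const u).measurable
  rw [show (fun p => S p u) = (fun γ : PathSp d T => γ u) ∘ S from rfl,
    ← Measure.map_map heval hS, ← Measure.map_map heval hS]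
  exact krDist_map_le_of_lipschitzWith _ _
    (LipschitzWith.mk_one fun _ _ => ContinuousMap.dist_apply_le_dist u) heval

lemma norm_drift_sub_drift_le_of_forall_le
    (hbLip : ∀ (t : ℝ) (x x' : Fin d → ℝ) (m m' : Measure (Fin d → ℝ)),
      IsProbabilityMeasure m → IsProbabilityMeasure m' →
      ‖b t x m - b t x' m'‖ ≤ K * (‖x - x'‖ + krDist m m'))
    (hK : 0 ≤ K) [IsProbabilityMeasure ν₁] [IsProbabilityMeasure ν₂] (hS₁ : Measurable S₁)
    (hS₂ : Measurable S₂) (u : Icc (0 : ℝ) T) {δ : ℝ}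
    (hδ : ∀ p, ‖S₁ p u - S₂ p u‖ ≤ δ) (q : InputSp d T) :
    ‖drift b ν₁ S₁ q u - drift b ν₂ S₂ q u‖ ≤
      K * (2 * δ + krDist (ν₁.map S₂) (ν₂.map S₂)) := by
  have := isProbabilityMeasure_map_eval hS₁ ν₁ u
  have := isProbabilityMeasure_map_eval hS₂ ν₁ u
  have := isProbabilityMeasure_map_eval hS₂ ν₂ u
  have hkr : krDist (ν₁.map fun p => S₁ p u) (ν₂.map fun p => S₂ p u) ≤
      δ + krDist (ν₁.map S₂) (ν₂.map S₂) :=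
    (krDist_triangle _ (ν₁.map fun p => S₂ p u) _).trans <| add_le_add
      (krDist_map_le_of_dist_le ν₁ ((continuous_eval_const u).measurable.comp hS₁)
        ((continuous_eval_const u).measurable.comp hS₂)
        fun p => (dist_eq_norm _ _).trans_le (hδ p))
      (krDist_map_eval_le hS₂ u)
  exact (norm_drift_sub_drift_le hbLip hS₁ hS₂ q q u).trans
    (mul_le_mul_of_nonneg_left (by linarith [hδ q]) hK)

lemma IsSolutionMap.norm_sub_apply_le_krDist
    (hbmeas : Measurable fun q : ℝ × (Fin d → ℝ) × Measure (Fin d → ℝ) => b q.1 q.2.1 q.2.2)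
    (hbLip : ∀ (t : ℝ) (x x' : Fin d → ℝ) (m m' : Measure (Fin d → ℝ)),
      IsProbabilityMeasure m → IsProbabilityMeasure m' →
      ‖b t x m - b t x' m'‖ ≤ K * (‖x - x'‖ + krDist m m'))
    (hbdd : ∀ t x m, ‖b t x m‖ ≤ K) [IsProbabilityMeasure ν₁] [IsProbabilityMeasure ν₂]
    (hS₁ : Measurable S₁) (hS₂ : Measurable S₂)
    (h₁ : IsSolutionMap b ν₁ S₁) (h₂ : IsSolutionMap b ν₂ S₂)
    (q : InputSp d T) (t : Icc (0 : ℝ) T) :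
    ‖S₁ q t - S₂ q t‖ ≤
      2 * (K * krDist (ν₁.map S₂) (ν₂.map S₂) * T) * Real.exp ((4 * K + 1) * t) := by
  have hK : 0 ≤ K := (norm_nonneg _).trans (hbdd 0 0 0)
  have hε : 0 ≤ krDist (ν₁.map S₂) (ν₂.map S₂) := krDist_nonneg _ _
  have hdrift (u : Icc (0 : ℝ) T) {δ : ℝ} (hδ : ∀ p, ‖S₁ p u - S₂ p u‖ ≤ δ) (q : InputSp d T) :=
    norm_drift_sub_drift_le_of_forall_le (ν₁ := ν₁) (ν₂ := ν₂) hbLip hK hS₁ hS₂ u hδ q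
  generalize krDist (ν₁.map S₂) (ν₂.map S₂) = ε at hε hdrift ⊢
  set L := 4 * K + 1
  have hL : 0 < L := by positivity
  have hKL : 4 * K ≤ L := by linarith
  clear_value L
  have hM (i : InputSp d T × Icc (0 : ℝ) T) : ‖S₁ i.1 i.2 - S₂ i.1 i.2‖ ≤ 2 * K * T := by
    simpa using IsSolutionMap.norm_sub_apply_le_add hbmeas hbdd hS₁ hS₂ h₁ h₂
      i.1.1 i.1.1 i.1.2 i.1.2 i.2
  have hw (i : InputSp d T × Icc (0 : ℝ) T) : 1 ≤ Real.exp (L * i.2) :=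
    Real.one_le_exp (mul_nonneg hL.le i.2.2.1)
  refine le_two_mul_mul_of_bootstrap hw (fun _ => norm_nonneg _) hM
    (fun D hD hu i => ?_) (q, t)
  obtain ⟨⟨x₀, γ⟩, t⟩ := i
  have := IsSolutionMap.norm_sub_apply_le_of_norm_drift_sub_le hbmeas hbdd hS₁ hS₂ h₁ h₂ hL
    (mul_nonneg (mul_nonneg zero_le_two hK) hD) x₀ x₀ γ γ t (c := K * ε) fun u _ =>
      (hdrift u (δ := D * Real.exp (L * u)) (fun p => hu (p, u)) (x₀, γ)).trans_eq (by ring)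
  have hKD : 2 * K * D / L ≤ D / 2 := by
    rw [div_le_iff₀ hL]; nlinarith
  have hεt : K * ε * t ≤ K * ε * T * Real.exp (L * t) := by
    have hT : 0 ≤ T := t.2.1.trans t.2.2
    calc K * ε * t ≤ K * ε * T * 1 := by rw [mul_one]; gcongr; exact t.2.2
      _ ≤ K * ε * T * Real.exp (L * t) := by gcongr; exact hw ((x₀, γ), t)
  simp only [sub_self, norm_zero, dist_self, zero_add] at this
  show ‖S₁ (x₀, γ) t - S₂ (x₀, γ) t‖ ≤ (K * ε * T + D / 2) * Real.exp (L * t)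
  linarith [mul_le_mul_of_nonneg_right hKD (Real.exp_pos (L * t)).le]

theorem IsSolutionMap.dist_apply_le_krDist (hT : 0 ≤ T)
    (hbmeas : Measurable fun q : ℝ × (Fin d → ℝ) × Measure (Fin d → ℝ) => b q.1 q.2.1 q.2.2)
    (hbLip : ∀ (t : ℝ) (x x' : Fin d → ℝ) (m m' : Measure (Fin d → ℝ)),
      IsProbabilityMeasure m → IsProbabilityMeasure m' →
      ‖b t x m - b t x' m'‖ ≤ K * (‖x - x'‖ + krDist m m'))
    (hbdd : ∀ t x m, ‖b t x m‖ ≤ K) [IsProbabilityMeasure ν₁] [IsProbabilityMeasure ν₂]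
    (hS₁ : Measurable S₁) (hS₂ : Measurable S₂)
    (h₁ : IsSolutionMap b ν₁ S₁) (h₂ : IsSolutionMap b ν₂ S₂) (q : InputSp d T) :
    dist (S₁ q) (S₂ q) ≤
      2 * K * T * Real.exp ((4 * K + 1) * T) * krDist (ν₁.map S₂) (ν₂.map S₂) := by
  have hK : 0 ≤ K := (norm_nonneg _).trans (hbdd 0 0 0)
  have hε : 0 ≤ krDist (ν₁.map S₂) (ν₂.map S₂) := krDist_nonneg _ _
  refine (ContinuousMap.dist_le (by positivity)).2 fun t => ?_
  calc dist (S₁ q t) (S₂ q t)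
      ≤ 2 * (K * krDist (ν₁.map S₂) (ν₂.map S₂) * T) * Real.exp ((4 * K + 1) * t) :=
        (dist_eq_norm _ _).trans_le
          (h₁.norm_sub_apply_le_krDist hbmeas hbLip hbdd hS₁ hS₂ h₂ q t)
    _ ≤ 2 * (K * krDist (ν₁.map S₂) (ν₂.map S₂) * T) * Real.exp ((4 * K + 1) * T) := by
        gcongr
        exact t.2.2
    _ = 2 * K * T * Real.exp ((4 * K + 1) * T) * krDist (ν₁.map S₂) (ν₂.map S₂) := by ring

end McKeanVlasov

/-- For a bounded drift `b`, Lipschitz in the state and (w.r.t. the Kantorovich–Rubinstein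
metric) in the measure argument, the solution map
`Ψ : P(ℝ^d × C_T) → P(C_T)`, `ν ↦ (S^ν)_# ν`, of the generalized McKean–Vlasov equation is
continuous with respect to weak convergence of probability measures. -/
theorem stmt17 (d : ℕ) (T : ℝ) (hT : 0 < T) (K : ℝ)
    (b : ℝ → (Fin d → ℝ) → Measure (Fin d → ℝ) → Fin d → ℝ)
    (hbmeas : Measurable fun q : ℝ × (Fin d → ℝ) × Measure (Fin d → ℝ) => b q.1 q.2.1 q.2.2)
    (hbLip : ∀ (t : ℝ) (x x' : Fin d → ℝ) (m m' : Measure (Fin d → ℝ)),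
      IsProbabilityMeasure m → IsProbabilityMeasure m' →
      ‖b t x m - b t x' m'‖ ≤ K * (‖x - x'‖ + krDist m m'))
    (hbdd : ∀ (t : ℝ) (x : Fin d → ℝ) (m : Measure (Fin d → ℝ)), ‖b t x m‖ ≤ K)
    (Ψ : ProbabilityMeasure ((Fin d → ℝ) × PathSp d T) → ProbabilityMeasure (PathSp d T))
    -- `Ψ ν = (S^ν)_# ν` where `S^ν` is the solution map of
    -- `x_t = x₀ + ∫₀^t b(s, x_s, (x_s)_# ν) ds + γ_t`
    (hΨ : ∀ ν : ProbabilityMeasure ((Fin d → ℝ) × PathSp d T),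
      ∃ S : (Fin d → ℝ) × PathSp d T → PathSp d T, Measurable S ∧
        (∀ (x₀ : Fin d → ℝ) (γ : PathSp d T) (t : Set.Icc (0:ℝ) T),
          S (x₀, γ) t = x₀ +
            (∫ s in Set.Icc (0:ℝ) (t:ℝ),
              Function.extend Subtype.val
                (fun u : Set.Icc (0:ℝ) T =>
                  b (u:ℝ) (S (x₀, γ) u)
                    ((ν : Measure ((Fin d → ℝ) × PathSp d T)).map fun q => S q u))
                0 s) + γ t) ∧
        (Ψ ν : Measure (PathSp d T)) =
          (ν : Measure ((Fin d → ℝ) × PathSp d T)).map S) :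
    Continuous Ψ := by
  choose S hSm hsol hΨS using hΨ
  refine continuous_iff_continuousAt.2 fun ν => ?_
  have hSc : Continuous (S ν) :=
    (IsSolutionMap.lipschitzWith hbmeas hbLip hbdd (hSm ν) (hsol ν)).continuous
  have hε : Tendsto (fun ν' : ProbabilityMeasure ((Fin d → ℝ) × PathSp d T) =>
      krDist ((ν' : Measure _).map (S ν)) ((ν : Measure _).map (S ν))) (𝓝 ν) (𝓝 0) := by
    simpa using tendsto_krDist_of_tendsto ((ProbabilityMeasure.continuous_map hSc).tendsto ν)
  have hunif : TendstoUniformly S (S ν) (𝓝 ν) := by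
    refine Metric.tendstoUniformly_iff.2 fun δ hδ => ?_
    have hC : Tendsto (fun ν' : ProbabilityMeasure ((Fin d → ℝ) × PathSp d T) =>
        2 * K * T * Real.exp ((4 * K + 1) * T) *
          krDist ((ν' : Measure _).map (S ν)) ((ν : Measure _).map (S ν))) (𝓝 ν) (𝓝 0) := by
      simpa using hε.const_mul (2 * K * T * Real.exp ((4 * K + 1) * T))
    filter_upwards [hC.eventually (Iio_mem_nhds hδ)] with ν' hν' q
    rw [dist_comm]
    exact (IsSolutionMap.dist_apply_le_krDist hT.le hbmeas hbLip hbdd (hSm ν') (hSm ν)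
      (hsol ν') (hsol ν) q).trans_lt hν'
  have hΨeq : Ψ = fun ν' => ν'.map (hSm ν').aemeasurable := funext fun ν' => Subtype.ext (hΨS ν')
  rw [ContinuousAt, hΨeq]
  exact ProbabilityMeasure.tendsto_map_of_tendstoUniformly tendsto_id hSm hSc hunif
end

section
/- Let (F_t)_{t≥0} be a right-continuous complete filtration on (Ω, A, ℙ), ζ an F_0-measurable random variable in ℝ^d, and W an (F_t)-progressively measurable process with continuous paths, such that (ζ,W) ∈ L^p(ℝ^d × C_T). Let b satisfy the p-Lipschitz assumption. Then the unique pathwise solution X of the generalized McKean–Vlasov equation dX_t = b(t, X_t, L(X_t)) dt + dW_t, X_0 = ζ, is (F_t)-progressively measurable. -/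
open MeasureTheory Filter Topology ENNReal

/-- The `p`-Wasserstein distance between two measures on a metric space. -/
noncomputable def wassersteinDist {E : Type*} [MeasurableSpace E] [PseudoMetricSpace E]
    (p : ℝ) (μ ν : Measure E) : ℝ :=
  (sInf { c : ℝ | ∃ m : Measure (E × E),
      m.map Prod.fst = μ ∧ m.map Prod.snd = ν ∧ c = ∫ x, dist x.1 x.2 ^ p ∂m }) ^ (1 / p)

/-!
Freeze the measure argument at the marginal laws `μ_t` of `X`: then `X` solves, pathwise, an
ordinary integral equation with drift `f t y = b t y μ_t`, which is Lipschitz in `y` because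
`W_p(μ_t, μ_t) = 0`, so by Gronwall its solutions are unique. Hence `X_t` is a function of `ζ`
and of `W` stopped at `t`, and this function is Borel: the set of triples `(z, w, x)` where `x`
solves the equation driven by `(z, w)` up to time `t` and is constant afterwards is Borel, and
the projection `(z, w, x) ↦ (z, w)` is injective on it, hence a Borel isomorphism onto its image
(Lusin–Souslin). So `X_t` agrees a.s. with an `F_t`-measurable variable and is itself
`F_t`-measurable by completeness; being adapted with continuous paths, `X` is progressively
measurable.
-/

theorem wassersteinDist_self {E : Type*} [MeasurableSpace E] [PseudoMetricSpace E] {p : ℝ}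
    (hp : p ≠ 0) (μ : Measure E) : wassersteinDist p μ μ = 0 := by
  set C := { c : ℝ | ∃ m : Measure (E × E),
      m.map Prod.fst = μ ∧ m.map Prod.snd = μ ∧ c = ∫ x, dist x.1 x.2 ^ p ∂m }
  have hdiag : Measurable fun a : E => (a, a) := measurable_id.prodMk measurable_id
  have hzero : (0 : ℝ) ∈ C := by
    refine ⟨μ.map fun a => (a, a), ?_, ?_, ?_⟩
    · simp [Measure.map_map measurable_fst hdiag, Function.comp_def]
    · simp [Measure.map_map measurable_snd hdiag, Function.comp_def]
    · by_cases hint : Integrable (fun x : E × E => dist x.1 x.2 ^ p) (μ.map fun a => (a, a))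
      · rw [integral_map hdiag.aemeasurable hint.aestronglyMeasurable]
        simp [Real.zero_rpow hp]
      · rw [integral_undef hint]
  have hnonneg : ∀ c ∈ C, 0 ≤ c := by
    rintro c ⟨m, -, -, rfl⟩
    exact integral_nonneg fun x => Real.rpow_nonneg dist_nonneg _
  have hinf : sInf C = 0 :=
    le_antisymm (csInf_le ⟨0, hnonneg⟩ hzero) (le_csInf ⟨0, hzero⟩ hnonneg)
  rw [wassersteinDist, hinf, Real.zero_rpow (one_div_ne_zero hp)]

theorem le_rpow_inv_mul_of_rpow_le_mul_rpow {a c K p : ℝ} (ha : 0 ≤ a) (hc : 0 ≤ c)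
    (hp : 0 < p) (h : a ^ p ≤ K * c ^ p) : a ≤ max K 0 ^ p⁻¹ * c := by
  have hK : 0 ≤ max K 0 := le_max_right _ _
  rw [← Real.rpow_le_rpow_iff ha (by positivity) hp, Real.mul_rpow (by positivity) hc,
    Real.rpow_inv_rpow hK hp.ne']
  exact h.trans (mul_le_mul_of_nonneg_right (le_max_left _ _) (by positivity))

theorem Icc_subset_closure_inter_range_ratCast {t : ℝ} (ht : 0 ≤ t) :
    Set.Icc 0 t ⊆ closure (Set.Icc 0 t ∩ Set.range ((↑) : ℚ → ℝ)) := by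
  rcases ht.eq_or_lt with rfl | ht
  · intro r hr
    obtain rfl : r = 0 := le_antisymm hr.2 hr.1
    exact subset_closure ⟨hr, 0, Rat.cast_zero⟩
  · calc Set.Icc 0 t = closure (Set.Ioo 0 t) := (closure_Ioo ht.ne).symm
      _ ⊆ closure (Set.Ioo 0 t ∩ Set.range ((↑) : ℚ → ℝ)) :=
        closure_minimal (Rat.denseRange_cast.open_subset_closure_inter isOpen_Ioo)
          isClosed_closure
      _ ⊆ _ := closure_mono (Set.inter_subset_inter_left _ Set.Ioo_subset_Icc_self)

theorem eqOn_zero_of_le_mul_integral {φ : ℝ → ℝ} {L t : ℝ} (hφ : Continuous φ)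
    (hφ0 : ∀ r ∈ Set.Icc 0 t, 0 ≤ φ r) (h : ∀ r ∈ Set.Icc 0 t, φ r ≤ L * ∫ u in 0..r, φ u) :
    ∀ r ∈ Set.Icc 0 t, φ r = 0 := by
  set ψ : ℝ → ℝ := fun r => ∫ u in 0..r, φ u
  have hψ' : ∀ r, HasDerivAt ψ (φ r) r := fun r =>
    (hφ.integral_hasStrictDerivAt 0 r).hasDerivAt
  have hψ0 : ∀ r ∈ Set.Icc 0 t, 0 ≤ ψ r := fun r hr =>
    intervalIntegral.integral_nonneg hr.1 fun u hu => hφ0 u ⟨hu.1, hu.2.trans hr.2⟩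
  have hψ_zero : ∀ r ∈ Set.Icc 0 t, ‖ψ r‖ ≤ 0 := by
    intro r hr
    have := norm_le_gronwallBound_of_norm_deriv_right_le (δ := 0) (K := L) (ε := 0)
      (fun u _ => (hψ' u).continuousAt.continuousWithinAt)
      (fun u _ => (hψ' u).hasDerivWithinAt) (by simp [ψ]) (fun u hu => ?_) r hr
    · rwa [gronwallBound_ε0_δ0] at this
    · rw [Real.norm_of_nonneg (hφ0 u (Set.Ico_subset_Icc_self hu)),
        Real.norm_of_nonneg (hψ0 u (Set.Ico_subset_Icc_self hu)), add_zero]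
      exact h u (Set.Ico_subset_Icc_self hu)
  intro r hr
  refine le_antisymm ?_ (hφ0 r hr)
  simpa [ψ, norm_le_zero_iff.1 (hψ_zero r hr)] using h r hr

-- No integrability of `g` is assumed: if it fails, it fails for `g'` too, and both (junk)
-- integrals vanish.
theorem norm_sub_le_integral_of_eq_add_integral {α E : Type*} [MeasurableSpace α]
    [NormedAddCommGroup E] [NormedSpace ℝ E] {μ : Measure α} {g g' : α → E} {h : α → ℝ}
    {a a' c c' : E} (ha : a = c + ∫ u, g u ∂μ + c') (ha' : a' = c + ∫ u, g' u ∂μ + c')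
    (hmeas : AEStronglyMeasurable (g - g') μ) (hh : Integrable h μ)
    (hbound : ∀ᵐ u ∂μ, ‖g u - g' u‖ ≤ h u) :
    ‖a - a'‖ ≤ ∫ u, h u ∂μ := by
  have hdiff : Integrable (g - g') μ := hh.mono' hmeas hbound
  by_cases hg : Integrable g μ
  · have hg' : Integrable g' μ := by simpa using hg.sub hdiff
    calc ‖a - a'‖ = ‖∫ u, (g - g') u ∂μ‖ := by
          rw [ha, ha', Pi.sub_def, integral_sub hg hg']
          abel_nf
      _ ≤ ∫ u, ‖(g - g') u‖ ∂μ := norm_integral_le_integral_norm _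
      _ ≤ ∫ u, h u ∂μ := integral_mono_ae hdiff.norm hh hbound
  · have hg' : ¬Integrable g' μ := fun hg' => hg (by simpa using hg'.add hdiff)
    rw [ha, ha', integral_undef hg, integral_undef hg', sub_self, norm_zero]
    exact integral_nonneg_of_ae (hbound.mono fun u hu => (norm_nonneg _).trans hu)

theorem Measurable.of_ae_eq_of_forall_null {Ω β : Type*} [MeasurableSpace β]
    {m m₀ : MeasurableSpace Ω} {μ : Measure[m₀] Ω}
    (hnull : ∀ s, MeasurableSet[m₀] s → μ s = 0 → MeasurableSet[m] s) {f g : Ω → β}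
    (hf : Measurable[m₀] f) (hg : Measurable[m] g) (hfg : f =ᵐ[μ] g) : Measurable[m] f := by
  obtain ⟨N, hfgN, hN, hN0⟩ := exists_measurable_superset_of_null (ae_iff.1 hfg)
  intro B hB
  have hsplit : f ⁻¹' B = (g ⁻¹' B \ N) ∪ (f ⁻¹' B ∩ N) := by
    ext ω
    by_cases hω : ω ∈ N
    · simp [hω]
    · have : f ω = g ω := not_not.1 fun h => hω (hfgN h)
      simp [hω, this]
  rw [hsplit]
  exact ((hg hB).diff (hnull N hN hN0)).union
    (hnull _ ((hf hB).inter hN) (measure_mono_null Set.inter_subset_right hN0))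

theorem ContinuousMap.measurable_of_forall_measurable_eval {Ω X E : Type*}
    {mΩ : MeasurableSpace Ω} [TopologicalSpace X] [TopologicalSpace.SeparableSpace X]
    [TopologicalSpace E] [T2Space E] [SecondCountableTopology E]
    [MeasurableSpace E] [BorelSpace E]
    [MeasurableSpace C(X, E)] [BorelSpace C(X, E)] [PolishSpace C(X, E)]
    {f : Ω → C(X, E)} (hf : ∀ x, Measurable fun ω => f ω x) : Measurable f := by
  obtain ⟨D, hDc, hDd⟩ := TopologicalSpace.exists_countable_dense X
  have := hDc.to_subtype
  have hev : MeasurableEmbedding fun (g : C(X, E)) (x : D) => g x :=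
    (continuous_pi fun x => continuous_eval_const _).measurableEmbedding fun g g' h =>
      ContinuousMap.coe_injective <| g.continuous.ext_on hDd g'.continuous fun x hx =>
        congrFun h ⟨x, hx⟩
  exact hev.measurable_comp_iff.1 (measurable_pi_lambda _ fun x => hf x)

namespace PathSp

variable {d : ℕ} {T : ℝ}

theorem measurable_map_eval (μ : Measure (PathSp d T)) [SFinite μ] :
    Measurable fun t : Set.Icc (0:ℝ) T => μ.map fun w : PathSp d T => w t := by
  refine Measure.measurable_of_measurable_coe _ fun s hs => ?_
  simp_rw [Measure.map_apply (continuous_eval_const _).measurable hs]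
  exact measurable_measure_prodMk_left
    ((continuous_eval.comp continuous_swap :
      Continuous fun q : Set.Icc (0:ℝ) T × PathSp d T => q.2 q.1).measurable hs)

def stopAt (t : Set.Icc (0:ℝ) T) (w : PathSp d T) : PathSp d T :=
  w.comp ⟨fun s => min s t, by fun_prop⟩

@[simp]
theorem stopAt_apply (t s : Set.Icc (0:ℝ) T) (w : PathSp d T) :
    stopAt t w s = w (min s t) :=
  rfl

theorem stopAt_apply_of_le {t s : Set.Icc (0:ℝ) T} (h : s ≤ t) (w : PathSp d T) :
    stopAt t w s = w s := by
  rw [stopAt_apply, min_eq_left h]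

theorem stopAt_stopAt (t : Set.Icc (0:ℝ) T) (w : PathSp d T) :
    stopAt t (stopAt t w) = stopAt t w := by
  ext1 s
  simp

theorem continuous_stopAt (t : Set.Icc (0:ℝ) T) : Continuous (stopAt (d := d) t) :=
  ContinuousMap.continuous_precomp _

noncomputable def drift (f : Set.Icc (0:ℝ) T → (Fin d → ℝ) → Fin d → ℝ) (x : PathSp d T) :
    ℝ → Fin d → ℝ :=
  Function.extend Subtype.val (fun u => f u (x u)) 0

section Drift

variable {f : Set.Icc (0:ℝ) T → (Fin d → ℝ) → Fin d → ℝ}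

theorem drift_apply (x : PathSp d T) (u : Set.Icc (0:ℝ) T) : drift f x u = f u (x u) :=
  Subtype.val_injective.extend_apply _ _ u

theorem drift_eq_indicator (hT : 0 ≤ T) (x : PathSp d T) :
    drift f x = (Set.Icc 0 T).indicator fun u =>
      f (Set.projIcc 0 T hT u) (x (Set.projIcc 0 T hT u)) := by
  ext1 u
  by_cases hu : u ∈ Set.Icc 0 T
  · rw [Set.indicator_of_mem hu, Set.projIcc_of_mem hT hu]
    exact drift_apply x ⟨u, hu⟩
  · rw [Set.indicator_of_notMem hu, drift, Function.extend_apply' _ _ _ fun h => hu ?_]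
    · rfl
    · obtain ⟨v, rfl⟩ := h
      exact v.2

theorem measurable_drift (hT : 0 ≤ T) (hf : Measurable (Function.uncurry f)) :
    Measurable fun q : PathSp d T × ℝ => drift f q.1 q.2 := by
  simp_rw [drift_eq_indicator hT]
  have hproj : Measurable fun q : PathSp d T × ℝ => Set.projIcc 0 T hT q.2 :=
    continuous_projIcc.measurable.comp measurable_snd
  have heval : Measurable fun q : PathSp d T × ℝ => q.1 (Set.projIcc 0 T hT q.2) :=
    (continuous_eval.measurable).comp (measurable_fst.prodMk hproj)
  exact (hf.comp (hproj.prodMk heval)).indicator (measurableSet_Icc.preimage measurable_snd)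

theorem measurable_integral_drift (hT : 0 ≤ T) (hf : Measurable (Function.uncurry f))
    (r : ℝ) :
    Measurable fun x : PathSp d T => ∫ u in Set.Icc 0 r, drift f x u :=
  ((measurable_drift hT hf).stronglyMeasurable.integral_prod_right'
    (ν := volume.restrict (Set.Icc 0 r))).measurable

theorem drift_stopAt_eqOn (t : Set.Icc (0:ℝ) T) (x : PathSp d T) :
    Set.EqOn (drift f (stopAt t x)) (drift f x) (Set.Icc 0 t) := by
  intro u hu
  have huT : u ∈ Set.Icc 0 T := ⟨hu.1, hu.2.trans t.2.2⟩
  rw [show u = ((⟨u, huT⟩ : Set.Icc (0:ℝ) T) : ℝ) from rfl, drift_apply, drift_apply,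
    stopAt_apply_of_le (show (⟨u, huT⟩ : Set.Icc (0:ℝ) T) ≤ t from hu.2)]

end Drift

def ratTimes : Set (Set.Icc (0:ℝ) T) := Subtype.val ⁻¹' Set.range ((↑) : ℚ → ℝ)

theorem countable_ratTimes : (ratTimes : Set (Set.Icc (0:ℝ) T)).Countable :=
  (Set.countable_range _).preimage Subtype.val_injective

-- The equation is imposed at rational times only, so that the set is Borel; stopping `x` at `t`
-- makes `(z, w, x) ↦ (z, w)` injective on it.
def solutionGraph (f : Set.Icc (0:ℝ) T → (Fin d → ℝ) → Fin d → ℝ) (t : Set.Icc (0:ℝ) T) :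
    Set ((Fin d → ℝ) × PathSp d T × PathSp d T) :=
  {q | (∀ s ∈ ratTimes, s ≤ t →
      q.2.2 s = q.1 + (∫ u in Set.Icc 0 (s:ℝ), drift f q.2.2 u) + q.2.1 s) ∧
    stopAt t q.2.2 = q.2.2}

section SolutionGraph

variable {f : Set.Icc (0:ℝ) T → (Fin d → ℝ) → Fin d → ℝ} {t : Set.Icc (0:ℝ) T}

theorem measurableSet_solutionGraph (hf : Measurable (Function.uncurry f)) :
    MeasurableSet (solutionGraph f t) := by
  have hT : 0 ≤ T := t.2.1.trans t.2.2
  have heval : ∀ s : Set.Icc (0:ℝ) T, Measurable fun w : PathSp d T => w s :=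
    fun s => (continuous_eval_const s).measurable
  simp only [solutionGraph, Set.ofPred_and, Set.ofPred_forall]
  refine MeasurableSet.inter ?_ ?_
  · refine MeasurableSet.biInter countable_ratTimes fun s _ => MeasurableSet.iInter fun _ => ?_
    refine measurableSet_eq_fun ((heval s).comp (measurable_snd.comp measurable_snd)) ?_
    exact (measurable_fst.add ((measurable_integral_drift hT hf s).comp
      (measurable_snd.comp measurable_snd))).add
      ((heval s).comp (measurable_fst.comp measurable_snd))
  · exact (isClosed_eq ((continuous_stopAt t).comp (continuous_snd.comp continuous_snd))
      (continuous_snd.comp continuous_snd)).measurableSet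

theorem stopAt_mem_solutionGraph {z : Fin d → ℝ} {w x : PathSp d T}
    (hx : ∀ s ≤ t, x s = z + (∫ u in Set.Icc 0 (s:ℝ), drift f x u) + w s) :
    (z, stopAt t w, stopAt t x) ∈ solutionGraph f t := by
  refine ⟨fun s _ hst => ?_, stopAt_stopAt t x⟩
  dsimp only
  rw [stopAt_apply_of_le hst, stopAt_apply_of_le hst, hx s hst,
    setIntegral_congr_fun measurableSet_Icc ((drift_stopAt_eqOn t x).mono
      (Set.Icc_subset_Icc_right (show (s:ℝ) ≤ t from hst)))]

variable {L : ℝ}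

theorem norm_sub_le_of_mem_solutionGraph (hT : 0 ≤ T) (hf : Measurable (Function.uncurry f))
    (hL : ∀ u y y', ‖f u y - f u y'‖ ≤ L * ‖y - y'‖) {z : Fin d → ℝ} {w x x' : PathSp d T}
    (hx : (z, w, x) ∈ solutionGraph f t) (hx' : (z, w, x') ∈ solutionGraph f t)
    {s : Set.Icc (0:ℝ) T} (hs : s ∈ ratTimes) (hst : s ≤ t) :
    ‖x s - x' s‖ ≤ L * ∫ u in (0:ℝ)..s, ‖Set.IccExtend hT x u - Set.IccExtend hT x' u‖ := by
  have hdrift : ∀ y : PathSp d T, Measurable (drift f y) := fun y =>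
    (measurable_drift hT hf).comp (measurable_const.prodMk measurable_id)
  have hφ : Continuous fun u => ‖Set.IccExtend hT x u - Set.IccExtend hT x' u‖ :=
    (x.continuous.Icc_extend'.sub x'.continuous.Icc_extend').norm
  rw [intervalIntegral.integral_of_le s.2.1, ← integral_Icc_eq_integral_Ioc,
    ← integral_const_mul]
  refine norm_sub_le_integral_of_eq_add_integral (hx.1 s hs hst) (hx'.1 s hs hst)
    ((hdrift x).sub (hdrift x')).aestronglyMeasurable
    ((continuous_const.mul hφ).integrableOn_Icc) ?_
  refine ae_restrict_of_forall_mem measurableSet_Icc fun u hu => ?_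
  have huT : u ∈ Set.Icc 0 T := ⟨hu.1, hu.2.trans s.2.2⟩
  rw [show u = ((⟨u, huT⟩ : Set.Icc (0:ℝ) T) : ℝ) from rfl, drift_apply, drift_apply,
    Set.IccExtend_val, Set.IccExtend_val]
  exact hL _ _ _

theorem eq_of_mem_solutionGraph (hf : Measurable (Function.uncurry f))
    (hL : ∀ u y y', ‖f u y - f u y'‖ ≤ L * ‖y - y'‖) {z : Fin d → ℝ} {w x x' : PathSp d T}
    (hx : (z, w, x) ∈ solutionGraph f t) (hx' : (z, w, x') ∈ solutionGraph f t) : x = x' := by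
  have hT : 0 ≤ T := t.2.1.trans t.2.2
  set φ : ℝ → ℝ := fun u => ‖Set.IccExtend hT x u - Set.IccExtend hT x' u‖
  have hφ : Continuous φ := (x.continuous.Icc_extend'.sub x'.continuous.Icc_extend').norm
  have hψ : Continuous fun r => L * ∫ u in (0:ℝ)..r, φ u :=
    continuous_const.mul
      (intervalIntegral.continuous_primitive (fun _ _ => hφ.intervalIntegrable _ _) 0)
  have hrat : ∀ r ∈ Set.Icc 0 (t:ℝ) ∩ Set.range ((↑) : ℚ → ℝ),
      φ r ≤ L * ∫ u in (0:ℝ)..r, φ u := by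
    rintro r ⟨hr, hrq⟩
    have hrT : r ∈ Set.Icc 0 T := ⟨hr.1, hr.2.trans t.2.2⟩
    simpa [φ, Set.IccExtend_of_mem hT _ hrT] using
      norm_sub_le_of_mem_solutionGraph hT hf hL hx hx' (s := ⟨r, hrT⟩) hrq hr.2
  have hφ_zero := eqOn_zero_of_le_mul_integral hφ (fun _ _ => norm_nonneg _) fun r hr =>
    closure_minimal hrat (isClosed_le hφ hψ) (Icc_subset_closure_inter_range_ratCast t.2.1 hr)
  have hxt : stopAt t x = x := hx.2
  have hxt' : stopAt t x' = x' := hx'.2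
  rw [← hxt, ← hxt']
  ext1 s
  have hmin : ((min s t : Set.Icc (0:ℝ) T) : ℝ) ∈ Set.Icc 0 (t:ℝ) :=
    ⟨(min s t).2.1, min_le_right (s:ℝ) t⟩
  have hzero := hφ_zero _ hmin
  simp only [φ, Set.IccExtend_val, norm_eq_zero, sub_eq_zero] at hzero
  simpa using hzero

end SolutionGraph

theorem exists_measurable_eval_solution {f : Set.Icc (0:ℝ) T → (Fin d → ℝ) → Fin d → ℝ}
    {L : ℝ} (hf : Measurable (Function.uncurry f)) (hL : ∀ u y y', ‖f u y - f u y'‖ ≤ L * ‖y - y'‖)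
    (t : Set.Icc (0:ℝ) T) :
    ∃ g : (Fin d → ℝ) × PathSp d T → Fin d → ℝ, Measurable g ∧
      ∀ (z : Fin d → ℝ) (w x : PathSp d T),
        (∀ s ≤ t, x s = z + (∫ u in Set.Icc 0 (s:ℝ), drift f x u) + w s) →
        g (z, stopAt t w) = x t := by
  have : StandardBorelSpace ((Fin d → ℝ) × PathSp d T × PathSp d T) := StandardBorelSpace.prod
  have := (measurableSet_solutionGraph (t := t) hf).standardBorel
  set e : solutionGraph f t → (Fin d → ℝ) × PathSp d T := fun q => (q.1.1, q.1.2.1)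
  have he : MeasurableEmbedding e := by
    refine Measurable.measurableEmbedding (by fun_prop) ?_
    rintro ⟨⟨z, w, x⟩, hx⟩ ⟨⟨z', w', x'⟩, hx'⟩ h
    obtain ⟨rfl, rfl⟩ := Prod.ext_iff.1 h
    obtain rfl := eq_of_mem_solutionGraph hf hL hx hx'
    rfl
  have hval : Measurable fun q : solutionGraph f t => q.1.2.2 t := by fun_prop
  refine ⟨Function.extend e (fun q => q.1.2.2 t) 0, he.measurable_extend hval measurable_const,
    fun z w x hx => ?_⟩
  have hmem := stopAt_mem_solutionGraph hx
  rw [show (z, stopAt t w) = e ⟨_, hmem⟩ from rfl, he.injective.extend_apply]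
  exact stopAt_apply_of_le le_rfl x

theorem measurable_stopAt_of_stronglyAdapted {Ω : Type*} {m : MeasurableSpace Ω}
    {F : Filtration (Set.Icc (0:ℝ) T) m} {W : Ω → PathSp d T}
    (hW : StronglyAdapted F fun t ω => W ω t) (t : Set.Icc (0:ℝ) T) :
    Measurable[F t] fun ω => stopAt t (W ω) :=
  ContinuousMap.measurable_of_forall_measurable_eval fun s =>
    (hW (min s t)).measurable.mono (F.mono (min_le_right s t)) le_rfl

end PathSp

theorem stmt18_general (d : ℕ) (T : ℝ) (hT : 0 < T) (p : ℝ) (hp : 1 ≤ p)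
    (b : ℝ → (Fin d → ℝ) → Measure (Fin d → ℝ) → Fin d → ℝ) (K : ℝ)
    (hbmeas : Measurable fun q : ℝ × (Fin d → ℝ) × Measure (Fin d → ℝ) => b q.1 q.2.1 q.2.2)
    (hbLip : ∀ (t : ℝ) (x x' : Fin d → ℝ) (m m' : Measure (Fin d → ℝ)),
      IsProbabilityMeasure m → IsProbabilityMeasure m' →
      ‖b t x m - b t x' m'‖ ^ p ≤ K * (‖x - x'‖ ^ p + wassersteinDist p m m' ^ p))
    {Ω : Type*} {mΩ : MeasurableSpace Ω} (P : Measure Ω) [IsProbabilityMeasure P]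
    (F : Filtration (Set.Icc (0:ℝ) T) mΩ)
    -- completeness: all `P`-null sets belong to `F_0`
    (hFcomplete : ∀ A : Set Ω, MeasurableSet[mΩ] A → P A = 0 →
      MeasurableSet[F ⟨0, Set.left_mem_Icc.mpr hT.le⟩] A)
    (ζ : Ω → Fin d → ℝ) (W : Ω → PathSp d T)
    (hζ : Measurable[F ⟨0, Set.left_mem_Icc.mpr hT.le⟩] ζ)
    (hW : ProgMeasurable F fun (t : Set.Icc (0:ℝ) T) (ω : Ω) => W ω t)
    -- `X` is the pathwise solution of the generalized McKean–Vlasov equation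
    (X : Ω → PathSp d T) (hXmeas : Measurable X)
    (hX : ∀ᵐ ω ∂P, ∀ t : Set.Icc (0:ℝ) T,
      X ω t = ζ ω +
        (∫ s in Set.Icc (0:ℝ) (t:ℝ),
          Function.extend Subtype.val
            (fun u : Set.Icc (0:ℝ) T =>
              b (u:ℝ) (X ω u) ((P.map X).map fun η : PathSp d T => η u))
            0 s) + W ω t) :
    ProgMeasurable F fun (t : Set.Icc (0:ℝ) T) (ω : Ω) => X ω t := by
  set ν : Set.Icc (0:ℝ) T → Measure (Fin d → ℝ) := fun u => (P.map X).map fun η => η u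
  have hp0 : 0 < p := zero_lt_one.trans_le hp
  have : IsProbabilityMeasure (P.map X) := Measure.isProbabilityMeasure_map hXmeas.aemeasurable
  have hf : Measurable (Function.uncurry fun (u : Set.Icc (0:ℝ) T) y => b u y (ν u)) :=
    hbmeas.comp ((measurable_subtype_coe.comp measurable_fst).prodMk
      (measurable_snd.prodMk ((PathSp.measurable_map_eval _).comp measurable_fst)))
  have hL : ∀ (u : Set.Icc (0:ℝ) T) y y',
      ‖b u y (ν u) - b u y' (ν u)‖ ≤ max K 0 ^ p⁻¹ * ‖y - y'‖ := by
    intro u y y'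
    have hνu : IsProbabilityMeasure (ν u) :=
      Measure.isProbabilityMeasure_map (continuous_eval_const u).aemeasurable
    have := hbLip u y y' (ν u) (ν u) hνu hνu
    rw [wassersteinDist_self hp0.ne', Real.zero_rpow hp0.ne', add_zero] at this
    exact le_rpow_inv_mul_of_rpow_le_mul_rpow (norm_nonneg _) (norm_nonneg _) hp0 this
  refine StronglyAdapted.isStronglyProgressive_of_continuous (fun t => ?_)
    fun ω => (X ω).continuous
  have hF0 : F ⟨0, Set.left_mem_Icc.mpr hT.le⟩ ≤ F t := F.mono t.2.1
  obtain ⟨g, hg, hgX⟩ := PathSp.exists_measurable_eval_solution hf hL t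
  have hgt : Measurable[F t] fun ω => g (ζ ω, PathSp.stopAt t (W ω)) :=
    hg.comp ((hζ.mono hF0 le_rfl).prodMk
      (PathSp.measurable_stopAt_of_stronglyAdapted (IsStronglyProgressive.stronglyAdapted hW) t))
  refine (Measurable.of_ae_eq_of_forall_null (fun s hs hs0 => hF0 _ (hFcomplete s hs hs0))
    ((continuous_eval_const t).measurable.comp hXmeas) hgt ?_).stronglyMeasurable
  filter_upwards [hX] with ω hω
  exact (hgX _ _ _ fun s _ => hω s).symm

/-- If the initial datum `ζ` is `F_0`-measurable and the driving path `W` is progressively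
measurable with respect to a right-continuous complete filtration `(F_t)`, then the unique
pathwise solution `X` of the generalized McKean–Vlasov equation
`X_t = ζ + ∫₀^t b(s, X_s, L(X_s)) ds + W_t` is `(F_t)`-progressively measurable. -/
theorem stmt18 (d : ℕ) (T : ℝ) (hT : 0 < T) (p : ℝ) (hp : 1 ≤ p)
    (b : ℝ → (Fin d → ℝ) → Measure (Fin d → ℝ) → Fin d → ℝ) (K : ℝ)
    (hbmeas : Measurable fun q : ℝ × (Fin d → ℝ) × Measure (Fin d → ℝ) => b q.1 q.2.1 q.2.2)
    (hbLip : ∀ (t : ℝ) (x x' : Fin d → ℝ) (m m' : Measure (Fin d → ℝ)),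
      IsProbabilityMeasure m → IsProbabilityMeasure m' →
      ‖b t x m - b t x' m'‖ ^ p ≤ K * (‖x - x'‖ ^ p + wassersteinDist p m m' ^ p))
    {Ω : Type*} {mΩ : MeasurableSpace Ω} (P : Measure Ω) [IsProbabilityMeasure P]
    (F : Filtration (Set.Icc (0:ℝ) T) mΩ)
    -- right-continuity of the filtration
    (hFright : ∀ t : Set.Icc (0:ℝ) T, t < ⟨T, Set.right_mem_Icc.mpr hT.le⟩ →
      F t = ⨅ (s : Set.Icc (0:ℝ) T) (_ : t < s), F s)
    -- completeness: all `P`-null sets belong to `F_0`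
    (hFcomplete : ∀ A : Set Ω, MeasurableSet[mΩ] A → P A = 0 →
      MeasurableSet[F ⟨0, Set.left_mem_Icc.mpr hT.le⟩] A)
    (ζ : Ω → Fin d → ℝ) (W : Ω → PathSp d T)
    (hζ : Measurable[F ⟨0, Set.left_mem_Icc.mpr hT.le⟩] ζ)
    (hW : ProgMeasurable F fun (t : Set.Icc (0:ℝ) T) (ω : Ω) => W ω t)
    (hWmeas : Measurable W)
    (hmom : ∫⁻ ω, ENNReal.ofReal (‖ζ ω‖ ^ p + ‖W ω‖ ^ p) ∂P < ⊤)
    -- `X` is the pathwise solution of the generalized McKean–Vlasov equation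
    (X : Ω → PathSp d T) (hXmeas : Measurable X)
    (hX : ∀ᵐ ω ∂P, ∀ t : Set.Icc (0:ℝ) T,
      X ω t = ζ ω +
        (∫ s in Set.Icc (0:ℝ) (t:ℝ),
          Function.extend Subtype.val
            (fun u : Set.Icc (0:ℝ) T =>
              b (u:ℝ) (X ω u) ((P.map X).map fun η : PathSp d T => η u))
            0 s) + W ω t) :
    ProgMeasurable F fun (t : Set.Icc (0:ℝ) T) (ω : Ω) => X ω t :=
  stmt18_general d T hT p hp b K hbmeas hbLip P F hFcomplete ζ W hζ hW X hXmeas hX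
end
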